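/- Let X₁,…,Xₙ be centered independent random variables and X̃₁,…,X̃ₙ centered independent random variables, p ≥ 2 an even integer, with a‖X_i‖_q ≤ ‖X̃_i‖_q ≤ b‖X_i‖_q for all 1 ≤ q ≤ p and all i. Define |||(X₁,…,Xₙ)|||_p := inf{ t > 0 : Σ_i log E[ (|X_i/t + 1|^p + |−X_i/t + 1|^p)/2 ] ≤ p }. Then a·|||(X₁,…,Xₙ)|||_p ≤ |||(X̃₁,…,X̃ₙ)|||_p ≤ b·|||(X₁,…,Xₙ)|||_p. -/

import Mathlib

open MeasureTheory ProbabilityTheory Real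

/-- The Latala functional `|||(X₁,…,Xₙ)|||_p`. -/
noncomputable def latalaNorm {Ω : Type*} [MeasureSpace Ω]
    {n : ℕ} (X : Fin n → Ω → ℝ) (p : ℕ) : ℝ :=
  sInf {t : ℝ | 0 < t ∧
    ∑ i, Real.log
        (∫ ω, (|X i ω / t + 1| ^ p + |-(X i ω) / t + 1| ^ p) / 2 ∂ℙ) ≤ p}

/-!
For even `p` the odd binomial terms of `(|x/t + 1|^p + |-x/t + 1|^p)/2` cancel, so each summand of
`|||X|||_p` is the logarithm of `∑_{k even} C(p,k) E|X_i|^k t^{-k}`, a polynomial in `1/t` with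
nonnegative coefficients. If `E|X̃_i|^k ≤ c^k E|X_i|^k` for all `k ≤ p`, the polynomial of `X̃`
at `c t` is at most that of `X` at `t`, so `c` times the admissible set of `X` lies in that of
`X̃`; it is nonempty because the polynomials tend to `1` as `t → ∞`.
-/

open Finset Filter Topology

theorem MeasureTheory.MemLp.integrable_abs_pow_of_le {Ω : Type*} [MeasurableSpace Ω]
    {μ : Measure Ω} [IsFiniteMeasure μ] {f : Ω → ℝ} {p k : ℕ} (hf : MemLp f p μ) (hk : k ≤ p) :
    Integrable (fun ω => |f ω| ^ k) μ := by
  simpa [Real.norm_eq_abs] using (hf.mono_exponent (by exact_mod_cast hk)).integrable_norm_pow'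

theorem integral_abs_pow_le_of_rpow_le {Ω : Type*} [MeasurableSpace Ω] {μ : Measure Ω}
    {f g : Ω → ℝ} {k : ℕ} (hk : k ≠ 0) {c : ℝ}
    (h : (∫ ω, |g ω| ^ (k : ℝ) ∂μ) ^ (1 / (k : ℝ)) ≤
      c * (∫ ω, |f ω| ^ (k : ℝ) ∂μ) ^ (1 / (k : ℝ))) :
    ∫ ω, |g ω| ^ k ∂μ ≤ c ^ k * ∫ ω, |f ω| ^ k ∂μ := by
  simp only [rpow_natCast, one_div] at h
  have hg : 0 ≤ ∫ ω, |g ω| ^ k ∂μ := integral_nonneg fun ω => by positivity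
  have hf : 0 ≤ ∫ ω, |f ω| ^ k ∂μ := integral_nonneg fun ω => by positivity
  simpa only [mul_pow, rpow_inv_natCast_pow hg hk, rpow_inv_natCast_pow hf hk] using
    pow_le_pow_left₀ (by positivity) h k

section EvenMomentPoly

variable {Ω : Type*} [MeasureSpace Ω]

theorem even_pow_abs_add_one_add_eq_sum {p : ℕ} (hp : Even p) (x : ℝ) :
    (|x + 1| ^ p + |-x + 1| ^ p) / 2 =
      ∑ k ∈ (range (p + 1)).filter Even, (p.choose k : ℝ) * x ^ k := by
  rw [hp.pow_abs, hp.pow_abs, add_pow, add_pow, ← sum_add_distrib, sum_div, sum_filter]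
  refine sum_congr rfl fun k _ => ?_
  rcases Nat.even_or_odd k with hk | hk
  · rw [if_pos hk, hk.neg_pow]; ring
  · rw [if_neg (Nat.not_even_iff_odd.mpr hk), hk.neg_pow]; ring

/-- `E[(|s X + 1|^p + |-s X + 1|^p)/2]` for even `p`, written through the even moments of `X`. -/
noncomputable def evenMomentPoly (f : Ω → ℝ) (p : ℕ) (s : ℝ) : ℝ :=
  ∑ k ∈ (range (p + 1)).filter Even, (p.choose k : ℝ) * (∫ ω, |f ω| ^ k ∂ℙ) * s ^ k

theorem integral_even_pow_abs_div_add_one_eq_evenMomentPoly [IsFiniteMeasure (ℙ : Measure Ω)]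
    {f : Ω → ℝ} {p : ℕ} (hp : Even p) (hf : MemLp f p ℙ) (t : ℝ) :
    ∫ ω, (|f ω / t + 1| ^ p + |-(f ω) / t + 1| ^ p) / 2 ∂ℙ = evenMomentPoly f p t⁻¹ := by
  have hpoint : ∀ ω, (|f ω / t + 1| ^ p + |-(f ω) / t + 1| ^ p) / 2
      = ∑ k ∈ (range (p + 1)).filter Even, (p.choose k : ℝ) * |f ω| ^ k * t⁻¹ ^ k := by
    intro ω
    rw [neg_div, even_pow_abs_add_one_add_eq_sum hp]
    refine sum_congr rfl fun k hk => ?_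
    rw [div_eq_mul_inv, mul_pow, (mem_filter.mp hk).2.pow_abs, mul_assoc]
  simp_rw [hpoint]
  rw [integral_finsetSum _ fun k hk => ?_]
  · simp only [evenMomentPoly, integral_mul_const, integral_const_mul]
  · exact ((hf.integrable_abs_pow_of_le
      (Nat.lt_succ_iff.mp (mem_range.mp (mem_filter.mp hk).1))).const_mul _).mul_const _

theorem one_le_evenMomentPoly [IsProbabilityMeasure (ℙ : Measure Ω)] (f : Ω → ℝ) (p : ℕ)
    {s : ℝ} (hs : 0 ≤ s) : 1 ≤ evenMomentPoly f p s := by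
  have h0 : 0 ∈ (range (p + 1)).filter Even := by simp
  calc (1 : ℝ) = (p.choose 0 : ℝ) * (∫ ω, |f ω| ^ 0 ∂ℙ) * s ^ 0 := by simp
    _ ≤ evenMomentPoly f p s :=
      single_le_sum (f := fun k => (p.choose k : ℝ) * (∫ ω, |f ω| ^ k ∂ℙ) * s ^ k)
        (fun k _ => by positivity) h0

theorem evenMomentPoly_zero [IsProbabilityMeasure (ℙ : Measure Ω)] (f : Ω → ℝ) (p : ℕ) :
    evenMomentPoly f p 0 = 1 := by
  simp [evenMomentPoly, zero_pow_eq]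

theorem continuous_evenMomentPoly (f : Ω → ℝ) (p : ℕ) : Continuous (evenMomentPoly f p) := by
  unfold evenMomentPoly
  fun_prop

theorem evenMomentPoly_le_of_integral_abs_pow_le {f g : Ω → ℝ} {p : ℕ} {c s : ℝ} (hs : 0 ≤ s)
    (hmom : ∀ k, 1 ≤ k → k ≤ p → ∫ ω, |g ω| ^ k ∂ℙ ≤ c ^ k * ∫ ω, |f ω| ^ k ∂ℙ) :
    evenMomentPoly g p s ≤ evenMomentPoly f p (c * s) := by
  refine sum_le_sum fun k hk => ?_
  rcases Nat.eq_zero_or_pos k with rfl | hk1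
  · simp
  · have hkp := Nat.lt_succ_iff.mp (mem_range.mp (mem_filter.mp hk).1)
    calc (p.choose k : ℝ) * (∫ ω, |g ω| ^ k ∂ℙ) * s ^ k
        ≤ (p.choose k : ℝ) * (c ^ k * ∫ ω, |f ω| ^ k ∂ℙ) * s ^ k := by
          gcongr
          exact hmom k hk1 hkp
      _ = (p.choose k : ℝ) * (∫ ω, |f ω| ^ k ∂ℙ) * (c * s) ^ k := by ring

end EvenMomentPoly

section LatalaNorm

variable {Ω : Type*} [MeasureSpace Ω] [IsProbabilityMeasure (ℙ : Measure Ω)] {n p : ℕ}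

theorem latalaNorm_eq_sInf_evenMomentPoly (hp : Even p) {X : Fin n → Ω → ℝ}
    (hX : ∀ i, MemLp (X i) p ℙ) :
    latalaNorm X p = sInf {t : ℝ | 0 < t ∧ ∑ i, log (evenMomentPoly (X i) p t⁻¹) ≤ p} := by
  simp only [latalaNorm, integral_even_pow_abs_div_add_one_eq_evenMomentPoly hp (hX _)]

theorem exists_sum_log_evenMomentPoly_le (hp : 0 < p) (X : Fin n → Ω → ℝ) :
    ∃ t : ℝ, 0 < t ∧ ∑ i, log (evenMomentPoly (X i) p t⁻¹) ≤ p := by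
  have hlim : Tendsto (fun t : ℝ => ∑ i, log (evenMomentPoly (X i) p t⁻¹)) atTop (𝓝 0) := by
    have := tendsto_finsetSum univ fun i _ =>
      ((continuous_evenMomentPoly (X i) p).tendsto' 0 1 (evenMomentPoly_zero _ _)).log
        one_ne_zero |>.comp tendsto_inv_atTop_zero
    simpa only [Function.comp_def, log_one, sum_const_zero] using this
  exact ((eventually_gt_atTop 0).and
    (hlim.eventually (eventually_le_nhds (Nat.cast_pos.mpr hp)))).exists

theorem latalaNorm_le_mul_of_integral_abs_pow_le (hp : Even p) (hp₀ : 0 < p)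
    {X Y : Fin n → Ω → ℝ} (hX : ∀ i, MemLp (X i) p ℙ) (hY : ∀ i, MemLp (Y i) p ℙ)
    {c : ℝ} (hc : 0 < c)
    (hmom : ∀ i k, 1 ≤ k → k ≤ p → ∫ ω, |Y i ω| ^ k ∂ℙ ≤ c ^ k * ∫ ω, |X i ω| ^ k ∂ℙ) :
    latalaNorm Y p ≤ c * latalaNorm X p := by
  rw [latalaNorm_eq_sInf_evenMomentPoly hp hX, latalaNorm_eq_sInf_evenMomentPoly hp hY,
    ← smul_eq_mul, ← Real.sInf_smul_of_nonneg hc.le]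
  obtain ⟨t₀, ht₀⟩ := exists_sum_log_evenMomentPoly_le hp₀ X
  refine csInf_le_csInf ⟨0, fun t ht => ht.1.le⟩ (Set.Nonempty.smul_set ⟨t₀, ht₀⟩) ?_
  rintro _ ⟨t, ⟨ht, hsum⟩, rfl⟩
  simp only [smul_eq_mul]
  have hct : 0 < c * t := mul_pos hc ht
  refine ⟨hct, le_trans (sum_le_sum fun i _ => ?_) hsum⟩
  have hrescale : c * (c * t)⁻¹ = t⁻¹ := by field_simp
  refine log_le_log (one_pos.trans_le (one_le_evenMomentPoly _ _ (by positivity))) ?_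
  simpa only [hrescale] using
    evenMomentPoly_le_of_integral_abs_pow_le (s := (c * t)⁻¹) (by positivity) (hmom i)

end LatalaNorm

theorem latala_norm_comparison_general
    {Ω : Type*} [MeasureSpace Ω] [IsProbabilityMeasure (ℙ : Measure Ω)]
    {n : ℕ} (X Xt : Fin n → Ω → ℝ)
    (p : ℕ) (hp : 2 ≤ p) (hpeven : Even p)
    (hXp : ∀ i, MemLp (X i) p ℙ) (hXtp : ∀ i, MemLp (Xt i) p ℙ)
    (a b : ℝ) (ha : 0 < a) (hb : 0 < b)
    (hcomp : ∀ i, ∀ q : ℝ, 1 ≤ q → q ≤ p →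
      a * (∫ ω, |X i ω| ^ q ∂ℙ) ^ (1 / q) ≤ (∫ ω, |Xt i ω| ^ q ∂ℙ) ^ (1 / q) ∧
      (∫ ω, |Xt i ω| ^ q ∂ℙ) ^ (1 / q) ≤ b * (∫ ω, |X i ω| ^ q ∂ℙ) ^ (1 / q)) :
    a * latalaNorm X p ≤ latalaNorm Xt p ∧
    latalaNorm Xt p ≤ b * latalaNorm X p := by
  have hp₀ : 0 < p := by omega
  have hmom : ∀ i (k : ℕ), 1 ≤ k → k ≤ p →
      ∫ ω, |X i ω| ^ k ∂ℙ ≤ a⁻¹ ^ k * ∫ ω, |Xt i ω| ^ k ∂ℙ ∧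
      ∫ ω, |Xt i ω| ^ k ∂ℙ ≤ b ^ k * ∫ ω, |X i ω| ^ k ∂ℙ := fun i k hk hkp =>
    have h := hcomp i k (by exact_mod_cast hk) (by exact_mod_cast hkp)
    ⟨integral_abs_pow_le_of_rpow_le (by omega) ((le_inv_mul_iff₀ ha).mpr h.1),
      integral_abs_pow_le_of_rpow_le (by omega) h.2⟩
  exact ⟨(le_inv_mul_iff₀ ha).mp <| latalaNorm_le_mul_of_integral_abs_pow_le hpeven hp₀ hXtp hXp
      (inv_pos.mpr ha) fun i k hk hkp => (hmom i k hk hkp).1,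
    latalaNorm_le_mul_of_integral_abs_pow_le hpeven hp₀ hXp hXtp hb
      fun i k hk hkp => (hmom i k hk hkp).2⟩

/-- If the centered independent sequences `X` and `X̃` satisfy
`a‖X_i‖_q ≤ ‖X̃_i‖_q ≤ b‖X_i‖_q` for all real `1 ≤ q ≤ p` (`p ≥ 2` even),
then `a |||X|||_p ≤ |||X̃|||_p ≤ b |||X|||_p`. -/
theorem latala_norm_comparison
    {Ω : Type*} [MeasureSpace Ω] [IsProbabilityMeasure (ℙ : Measure Ω)]
    {n : ℕ} (X Xt : Fin n → Ω → ℝ)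
    (hXmeas : ∀ i, Measurable (X i)) (hXtmeas : ∀ i, Measurable (Xt i))
    (hXind : iIndepFun X ℙ)
    (hXtind : iIndepFun Xt ℙ)
    (hXcent : ∀ i, ∫ ω, X i ω ∂ℙ = 0) (hXtcent : ∀ i, ∫ ω, Xt i ω ∂ℙ = 0)
    (p : ℕ) (hp : 2 ≤ p) (hpeven : Even p)
    (hXp : ∀ i, MemLp (X i) p ℙ) (hXtp : ∀ i, MemLp (Xt i) p ℙ)
    (a b : ℝ) (ha : 0 < a) (hb : 0 < b)
    (hcomp : ∀ i, ∀ q : ℝ, 1 ≤ q → q ≤ p →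
      a * (∫ ω, |X i ω| ^ q ∂ℙ) ^ (1 / q) ≤ (∫ ω, |Xt i ω| ^ q ∂ℙ) ^ (1 / q) ∧
      (∫ ω, |Xt i ω| ^ q ∂ℙ) ^ (1 / q) ≤ b * (∫ ω, |X i ω| ^ q ∂ℙ) ^ (1 / q)) :
    a * latalaNorm X p ≤ latalaNorm Xt p ∧
    latalaNorm Xt p ≤ b * latalaNorm X p :=
  latala_norm_comparison_general X Xt p hp hpeven hXp hXtp a b ha hb hcomp
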